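/- arXiv:2108.04054 — 3 statements merged into one kernel-verified Lean document; each statement's English description precedes it below -/
import Mathlib

section
/- Fix a positive integer M and an even positive integer k, and let the constraint value be C = k/(2M). A discrete strategy B with mca(B) ≤ C satisfies wp(B; B') ≥ 0 for every discrete strategy B' with mca(B') ≤ C if and only if mca(B) = C, B(j) = B(0) for every even j with 0 ≤ j ≤ k, B(j) = B(1) for every odd j with 0 ≤ j ≤ k, and B(j) = 0 for all j > k. -/
open Set

/-- A discrete strategy: a nonnegative finitely supported function on `ℕ`
with positive total mass `|A| = Σ_j A(j)`. -/
def IsDStrategy (A : ℕ → ℝ) : Prop :=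
  (∀ j, 0 ≤ A j) ∧ (Function.support A).Finite ∧ 0 < ∑ᶠ j, A j

/-- Mean competitive ability on the grid `{j/M : j ∈ ℕ}`:
`mcaD M A = (Σ_j (j/M) A(j)) / (Σ_j A(j))`. -/
noncomputable def mcaD (M : ℕ) (A : ℕ → ℝ) : ℝ :=
  (∑ᶠ j : ℕ, ((j : ℝ) / M) * A j) / (∑ᶠ j : ℕ, A j)

/-- Discrete payoff `wpD A B = Σ_j A(j) (Σ_{i<j} B(i) − Σ_{i>j} B(i))`. -/
noncomputable def wpD (A B : ℕ → ℝ) : ℝ :=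
  ∑ᶠ j : ℕ, A j * ((∑ᶠ i ∈ Iio j, B i) - ∑ᶠ i ∈ Ioi j, B i)

/-!
Write `wpD B B' = ∑ i, B' i * g i`, where `g = wpPure B` is the payoff of `B` against pure
strategies; then `g i - g (i + 1) = B i + B (i + 1)`. With `k = 2h` a strategy is admissible iff
its mean index is at most `h`.

If `B` alternates on `[0, 2h]` with pair sum `s` and vanishes beyond, then `g i = (h - i) s` on
`[0, 2h]` and `g i ≥ (h - i) s` beyond, so `wpD B B' ≥ s ∑ B' i (h - i) ≥ 0`.

Conversely, the two-point tests `{j, 2h - j}` give `g j + g (2h - j) ≥ 0`, hence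
`∑_{j ≤ 2h} g j ≥ 0`. By antisymmetry of the payoff this sum is minus the payoff of the uniform
strategy on `[0, 2h]` against `B`, which is at most `2 ∑ (i - h) B i - B (2h, ∞) ≤ 0`. So `B` has
mean exactly `h`, no mass beyond `2h`, and `g (2h - j) = -g j`. Two-point tests with weights
`h - j` at `j' < h` and `h - j'` at `2h - j > h` then force `g` to be affine on `[0, 2h]`, i.e. all
pair sums `B i + B (i + 1)` are equal.
-/

open Finset Filter Function

section FiniteSums

variable {α : Type*} [AddCommMonoid α] {f : ℕ → α} {N : ℕ}

theorem support_finite_iff_eventually_eq_zero : (support f).Finite ↔ ∀ᶠ i in atTop, f i = 0 := by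
  rw [← Nat.cofinite_eq_atTop, eventually_cofinite]
  rfl

theorem finsum_eq_sum_range (hf : ∀ i ≥ N, f i = 0) : ∑ᶠ i, f i = ∑ i ∈ range N, f i :=
  finsum_eq_sum_of_support_subset f fun i hi => by
    by_contra h
    exact hi (hf i (by simpa using h))

theorem finsum_mem_eq_sum_range (hf : ∀ i ≥ N, f i = 0) (s : Set ℕ) [DecidablePred (· ∈ s)] :
    ∑ᶠ i ∈ s, f i = ∑ i ∈ range N, if i ∈ s then f i else 0 := by
  rw [finsum_mem_def, finsum_eq_sum_range (N := N) fun i hi => by simp [hf i hi]]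
  simp only [Set.indicator_apply]

theorem exists_forall_ge_eq_zero (hf : (support f).Finite) (n : ℕ) :
    ∃ N ≥ n, ∀ i ≥ N, f i = 0 := by
  obtain ⟨N, hN⟩ := eventually_atTop.1
    ((support_finite_iff_eventually_eq_zero.1 hf).and (eventually_ge_atTop n))
  exact ⟨N, (hN N le_rfl).2, fun i hi => (hN i hi).1⟩

theorem sum_range_add_reflect (f : ℕ → ℝ) (n : ℕ) :
    ∑ j ∈ range (n + 1), (f j + f (n - j)) = 2 * ∑ j ∈ range (n + 1), f j := by
  rw [sum_add_distrib, ← sum_range_reflect f (n + 1)]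
  simp only [add_tsub_cancel_right]
  ring

end FiniteSums

/-- The payoff `wpD B (Pi.single i 1)` of `B` against the pure strategy `i`. -/
noncomputable def wpPure (B : ℕ → ℝ) (i : ℕ) : ℝ :=
  ∑ᶠ j ∈ Set.Ioi i, B j - ∑ᶠ j ∈ Set.Iio i, B j

section Payoff

variable {A B : ℕ → ℝ} {N : ℕ}

theorem wpD_eq_sum_mul_wpPure (hA : ∀ i ≥ N, A i = 0) (hB : ∀ i ≥ N, B i = 0) :
    wpD A B = ∑ i ∈ range N, B i * wpPure A i := by
  have hAB : ∀ j ≥ N, A j * (∑ᶠ i ∈ Set.Iio j, B i - ∑ᶠ i ∈ Set.Ioi j, B i) = 0 := fun j hj => by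
    simp [hA j hj]
  rw [wpD, finsum_eq_sum_range hAB]
  simp only [wpPure, finsum_mem_eq_sum_range hA,
    finsum_mem_eq_sum_range hB, mul_sub, mul_sum, ← sum_sub_distrib]
  rw [sum_comm]
  refine sum_congr rfl fun i _ => sum_congr rfl fun j _ => ?_
  simp only [Set.mem_Iio, Set.mem_Ioi]
  split_ifs <;> ring

theorem wpD_eq_neg_sum_mul_wpPure (hA : ∀ i ≥ N, A i = 0) :
    wpD A B = -∑ i ∈ range N, A i * wpPure B i := by
  rw [← finsum_eq_sum_range fun i hi => by simp [hA i hi], ← finsum_neg_distrib, wpD]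
  simp only [wpPure, ← mul_neg, neg_sub]

theorem wpPure_eq (hB : (support B).Finite) (i : ℕ) :
    wpPure B i = ∑ᶠ j, B j - ∑ j ∈ range (i + 1), B j - ∑ j ∈ range i, B j := by
  have hIic : ((range (i + 1) : Finset ℕ) : Set ℕ) = Set.Iic i := by
    ext; simp
  have hsplit := finsum_mem_add_sdiff' (f := B) (subset_univ (Set.Iic i)) (by simpa using hB)
  rw [← hIic, finsum_mem_coe_finset, ← Set.compl_eq_univ_sdiff, hIic, compl_Iic,
    finsum_mem_univ] at hsplit
  rw [wpPure, ← coe_range, finsum_mem_coe_finset, ← hsplit]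
  ring

theorem wpPure_sub_wpPure_succ (hB : (support B).Finite) (i : ℕ) :
    wpPure B i - wpPure B (i + 1) = B i + B (i + 1) := by
  rw [wpPure_eq hB, wpPure_eq hB, sum_range_succ _ (i + 1), sum_range_succ]
  ring

theorem add_succ_eq_of_wpPure_eq_mul (hB : (support B).Finite) {n : ℕ} {c lam : ℝ}
    (hg : ∀ j ≤ n, wpPure B j = (c - j) * lam) : ∀ j < n, B j + B (j + 1) = lam := by
  intro j hj
  rw [← wpPure_sub_wpPure_succ hB, hg j hj.le, hg (j + 1) hj]
  push_cast
  ring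

end Payoff

section Admissibility

variable {M N : ℕ} {B : ℕ → ℝ}

theorem IsDStrategy.sum_range_pos (hB : IsDStrategy B) (hN : ∀ i ≥ N, B i = 0) :
    0 < ∑ i ∈ range N, B i :=
  finsum_eq_sum_range hN ▸ hB.2.2

theorem isDStrategy_of_forall_ge (h0 : ∀ i, 0 ≤ B i) (hN : ∀ i ≥ N, B i = 0)
    (hpos : 0 < ∑ i ∈ range N, B i) : IsDStrategy B :=
  ⟨h0, support_finite_iff_eventually_eq_zero.2 (eventually_atTop.2 ⟨N, hN⟩),
    finsum_eq_sum_range hN ▸ hpos⟩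

theorem mcaD_sub_div_eq (hM : 0 < M) (hN : ∀ i ≥ N, B i = 0) (hpos : 0 < ∑ i ∈ range N, B i)
    (c : ℝ) :
    mcaD M B - c / M = (∑ i ∈ range N, ((i : ℝ) - c) * B i) / (M * ∑ i ∈ range N, B i) := by
  rw [mcaD, finsum_eq_sum_range hN, finsum_eq_sum_range fun i hi => by simp [hN i hi]]
  field_simp
  simp only [sub_mul, sum_sub_distrib, ← mul_sum, ← sum_div]
  field_simp

theorem mcaD_le_div_iff (hM : 0 < M) (hB : IsDStrategy B) (hN : ∀ i ≥ N, B i = 0) (c : ℝ) :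
    mcaD M B ≤ c / M ↔ ∑ i ∈ range N, ((i : ℝ) - c) * B i ≤ 0 := by
  have hpos := hB.sum_range_pos hN
  rw [← sub_nonpos, mcaD_sub_div_eq hM hN hpos, div_le_iff₀ (by positivity), zero_mul]

theorem mcaD_eq_div_iff (hM : 0 < M) (hB : IsDStrategy B) (hN : ∀ i ≥ N, B i = 0) (c : ℝ) :
    mcaD M B = c / M ↔ ∑ i ∈ range N, ((i : ℝ) - c) * B i = 0 := by
  have hpos := hB.sum_range_pos hN
  rw [← sub_eq_zero, mcaD_sub_div_eq hM hN hpos, div_eq_zero_iff, or_iff_left (by positivity)]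

end Admissibility

theorem add_succ_eq_iff_parity {B : ℕ → ℝ} {n : ℕ} :
    (∀ j < n, B j + B (j + 1) = B 0 + B 1) ↔
      (∀ j ≤ n, Even j → B j = B 0) ∧ (∀ j ≤ n, Odd j → B j = B 1) := by
  constructor
  · intro hpair
    have hpar : ∀ j ≤ n, B j = if Even j then B 0 else B 1 := by
      intro j hj
      induction j with
      | zero => simp
      | succ j ih =>
        have hstep := hpair j hj
        rw [ih (by omega)] at hstep
        by_cases he : Even j <;> simp only [he, Nat.even_add_one, if_true, if_false, not_true,
          not_false_eq_true] at hstep ⊢ <;> linarith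
    exact ⟨fun j hj he => by simp [hpar j hj, he],
      fun j hj ho => by simp [hpar j hj, Nat.not_even_iff_odd.2 ho]⟩
  · rintro ⟨heven, hodd⟩ j hj
    rcases Nat.even_or_odd j with he | ho
    · rw [heven j hj.le he, hodd (j + 1) hj he.add_one]
    · rw [hodd j hj.le ho, heven (j + 1) hj ho.add_one, add_comm]

section Alternating

variable {B : ℕ → ℝ} {h : ℕ} {s : ℝ}

theorem wpPure_eq_wpPure_zero_sub (hB : (support B).Finite) {n : ℕ}
    (hpair : ∀ j < n, B j + B (j + 1) = s) {i : ℕ} (hi : i ≤ n) :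
    wpPure B i = wpPure B 0 - i * s := by
  induction i with
  | zero => simp
  | succ i ih =>
    have hstep := wpPure_sub_wpPure_succ hB i
    rw [hpair i hi] at hstep
    push_cast
    linarith [ih (by omega)]

theorem finsum_eq_of_alternating (hB : (support B).Finite)
    (hpair : ∀ j < 2 * h, B j + B (j + 1) = s) (hend : B (2 * h) = B 0)
    (hzero : ∀ j > 2 * h, B j = 0) : ∑ᶠ j, B j = B 0 + h * s := by
  have htot : ∑ᶠ j, B j = ∑ j ∈ range (2 * h + 1), B j := finsum_eq_sum_range hzero
  have hfirst := wpPure_eq hB 0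
  have hlast := wpPure_eq hB (2 * h)
  have hlin := wpPure_eq_wpPure_zero_sub hB hpair le_rfl
  rw [sum_range_succ] at htot hlast
  simp only [zero_add, sum_range_one, range_zero, sum_empty] at hfirst
  push_cast at hlin
  linarith

theorem wpPure_of_alternating_of_le (hB : (support B).Finite)
    (hpair : ∀ j < 2 * h, B j + B (j + 1) = s) (hend : B (2 * h) = B 0)
    (hzero : ∀ j > 2 * h, B j = 0) {i : ℕ} (hi : i ≤ 2 * h) : wpPure B i = (h - i) * s := by
  have hfirst := wpPure_eq hB 0
  simp only [zero_add, sum_range_one, range_zero, sum_empty] at hfirst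
  rw [wpPure_eq_wpPure_zero_sub hB hpair hi, hfirst,
    finsum_eq_of_alternating hB hpair hend hzero]
  ring

theorem wpPure_of_alternating_of_gt (hB : (support B).Finite)
    (hpair : ∀ j < 2 * h, B j + B (j + 1) = s) (hend : B (2 * h) = B 0)
    (hzero : ∀ j > 2 * h, B j = 0) {i : ℕ} (hi : 2 * h < i) : wpPure B i = -(B 0 + h * s) := by
  rw [wpPure_eq hB, ← finsum_eq_sum_range fun j hj => hzero j (by omega),
    ← finsum_eq_sum_range fun j hj => hzero j (by omega),
    finsum_eq_of_alternating hB hpair hend hzero]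
  ring

end Alternating

def IsDEquilibrium (M : ℕ) (C : ℝ) (B : ℕ → ℝ) : Prop :=
  ∀ B' : ℕ → ℝ, IsDStrategy B' → mcaD M B' ≤ C → 0 ≤ wpD B B'

section Equilibrium

variable {M h : ℕ} {B : ℕ → ℝ}

theorem le_wpPure_of_alternating (h0 : ∀ j, 0 ≤ B j) (hB : (support B).Finite)
    (hpair : ∀ j < 2 * h, B j + B (j + 1) = B 0 + B 1) (hzero : ∀ j > 2 * h, B j = 0) (i : ℕ) :
    (h - i) * (B 0 + B 1) ≤ wpPure B i := by
  have hend := (add_succ_eq_iff_parity.1 hpair).1 (2 * h) le_rfl (even_two_mul h)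
  rcases le_or_gt i (2 * h) with hi | hi
  · exact (wpPure_of_alternating_of_le hB hpair hend hzero hi).ge
  · rw [wpPure_of_alternating_of_gt hB hpair hend hzero hi]
    have hiR : (2 * h + 1 : ℝ) ≤ i := by exact_mod_cast hi
    nlinarith [h0 0, h0 1]

theorem isDEquilibrium_of_alternating (hM : 0 < M) (h0 : ∀ j, 0 ≤ B j)
    (hB : (support B).Finite) (hpair : ∀ j < 2 * h, B j + B (j + 1) = B 0 + B 1)
    (hzero : ∀ j > 2 * h, B j = 0) : IsDEquilibrium M (h / M) B := by
  intro B' hB' hB'C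
  obtain ⟨N₀, -, hN₀⟩ := exists_forall_ge_eq_zero hB 0
  obtain ⟨N, hNN₀, hN⟩ := exists_forall_ge_eq_zero hB'.2.1 N₀
  rw [mcaD_le_div_iff hM hB' hN] at hB'C
  rw [wpD_eq_sum_mul_wpPure (fun i hi => hN₀ i (hNN₀.trans hi)) hN]
  calc (0 : ℝ) ≤ (B 0 + B 1) * -∑ i ∈ range N, ((i : ℝ) - h) * B' i :=
        mul_nonneg (add_nonneg (h0 0) (h0 1)) (by linarith)
    _ = ∑ i ∈ range N, B' i * ((h - i) * (B 0 + B 1)) := by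
        rw [← sum_neg_distrib, mul_sum]
        exact sum_congr rfl fun i _ => by ring
    _ ≤ ∑ i ∈ range N, B' i * wpPure B i := sum_le_sum fun i _ =>
        mul_le_mul_of_nonneg_left (le_wpPure_of_alternating h0 hB hpair hzero i) (hB'.1 i)

theorem IsDEquilibrium.twoPoint_nonneg {c : ℝ} (heq : IsDEquilibrium M (c / M) B) (hM : 0 < M)
    (hB : (support B).Finite) {a b : ℝ} (ha : 0 ≤ a) (hb : 0 ≤ b) (hab : 0 < a + b) {i j : ℕ}
    (hmean : i * a + j * b ≤ c * (a + b)) : 0 ≤ a * wpPure B i + b * wpPure B j := by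
  obtain ⟨N, hijN, hN⟩ := exists_forall_ge_eq_zero hB (max i j + 1)
  set B' : ℕ → ℝ := Pi.single i a + Pi.single j b
  have hB'N : ∀ n ≥ N, B' n = 0 := fun n hn => by
    simp [B', show n ≠ i by omega, show n ≠ j by omega]
  have hsum : ∀ f : ℕ → ℝ, ∑ n ∈ range N, B' n * f n = a * f i + b * f j := fun f => by
    simp [B', add_mul, sum_add_distrib, Pi.single_apply, show i < N by omega,
      show j < N by omega]
  have hB'0 : 0 ≤ B' := add_nonneg (Pi.single_nonneg.2 ha) (Pi.single_nonneg.2 hb)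
  have hmass : ∑ n ∈ range N, B' n = a + b := by simpa using hsum 1
  have hB' : IsDStrategy B' := isDStrategy_of_forall_ge hB'0 hB'N (hmass ▸ hab)
  have hB'C : mcaD M B' ≤ c / M := by
    rw [mcaD_le_div_iff hM hB' hB'N, sum_congr rfl fun n _ => mul_comm _ _, hsum]
    linarith
  simpa only [wpD_eq_sum_mul_wpPure hN hB'N, hsum] using heq B' hB' hB'C

theorem sum_range_wpPure_le (h0 : ∀ i, 0 ≤ B i) {N : ℕ} (hN : ∀ i ≥ N, B i = 0)
    (hhN : 2 * h < N) :
    ∑ j ∈ range (2 * h + 1), wpPure B j ≤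
      2 * ∑ i ∈ range N, ((i : ℝ) - h) * B i - ∑ i ∈ range N, if 2 * h < i then B i else 0 := by
  set U : ℕ → ℝ := fun i => if i ≤ 2 * h then 1 else 0
  have hUzero : ∀ i > 2 * h, U i = 0 := fun i hi => if_neg (by omega)
  have hUfin : (support U).Finite :=
    support_finite_iff_eventually_eq_zero.2 (eventually_atTop.2 ⟨_, hUzero⟩)
  have hUpair : ∀ j < 2 * h, U j + U (j + 1) = 2 := fun j hj => by
    simp only [U, if_pos hj.le, if_pos (show j + 1 ≤ 2 * h by omega)]
    norm_num
  have hUend : U (2 * h) = U 0 := by simp [U]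
  have hUB : ∑ j ∈ range (2 * h + 1), wpPure B j = -∑ i ∈ range N, B i * wpPure U i := by
    rw [← wpD_eq_sum_mul_wpPure (fun i hi => hUzero i (by omega)) hN,
      wpD_eq_neg_sum_mul_wpPure hUzero, neg_neg]
    exact sum_congr rfl fun j hj => by simp [U, Nat.lt_succ_iff.1 (mem_range.1 hj)]
  rw [hUB, mul_sum, ← sum_neg_distrib, ← sum_sub_distrib]
  refine sum_le_sum fun i _ => ?_
  rcases le_or_gt i (2 * h) with hi | hi
  · rw [wpPure_of_alternating_of_le hUfin hUpair hUend hUzero hi, if_neg (by omega)]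
    linarith
  · rw [wpPure_of_alternating_of_gt hUfin hUpair hUend hUzero hi, if_pos hi]
    have hiR : (2 * h + 1 : ℝ) ≤ i := by exact_mod_cast hi
    simp only [U, if_pos (Nat.zero_le _)]
    nlinarith [h0 i]

theorem IsDEquilibrium.wpPure_add_wpPure_reflect_nonneg (heq : IsDEquilibrium M (h / M) B)
    (hM : 0 < M) (hB : (support B).Finite) {j : ℕ} (hj : j ≤ 2 * h) :
    0 ≤ wpPure B j + wpPure B (2 * h - j) := by
  have hmean : (j : ℝ) * 1 + ((2 * h - j : ℕ) : ℝ) * 1 ≤ h * (1 + 1) := by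
    push_cast [Nat.cast_sub hj]
    linarith
  simpa using heq.twoPoint_nonneg hM hB zero_le_one zero_le_one (by norm_num) hmean

theorem IsDEquilibrium.mcaD_eq_and_eq_zero (heq : IsDEquilibrium M (h / M) B) (hM : 0 < M)
    (hB : IsDStrategy B) (hBC : mcaD M B ≤ h / M) :
    mcaD M B = h / M ∧ (∀ j > 2 * h, B j = 0) ∧
      ∀ j ≤ 2 * h, wpPure B j + wpPure B (2 * h - j) = 0 := by
  obtain ⟨N, hhN, hN⟩ := exists_forall_ge_eq_zero hB.2.1 (2 * h + 1)
  have hmean := (mcaD_le_div_iff hM hB hN h).1 hBC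
  have htail_nonneg : ∀ i ∈ range N, 0 ≤ if 2 * h < i then B i else 0 :=
    fun i _ => ite_nonneg (hB.1 i) le_rfl
  have hpairs_nonneg : ∀ j ∈ range (2 * h + 1), 0 ≤ wpPure B j + wpPure B (2 * h - j) :=
    fun j hj => heq.wpPure_add_wpPure_reflect_nonneg hM hB.2.1 (Nat.lt_succ_iff.1 (mem_range.1 hj))
  have hpairs := sum_nonneg hpairs_nonneg
  have htail := sum_nonneg htail_nonneg
  have hle := sum_range_wpPure_le hB.1 hN hhN
  rw [sum_range_add_reflect] at hpairs
  refine ⟨(mcaD_eq_div_iff hM hB hN h).2 (by linarith), fun j hj => ?_, fun j hj => ?_⟩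
  · rcases lt_or_ge j N with hjN | hjN
    · simpa [hj] using (sum_eq_zero_iff_of_nonneg htail_nonneg).1 (by linarith) j (mem_range.2 hjN)
    · exact hN j hjN
  · refine (sum_eq_zero_iff_of_nonneg hpairs_nonneg).1 ?_ j (mem_range.2 (by omega))
    rw [sum_range_add_reflect]
    linarith

theorem IsDEquilibrium.exists_wpPure_eq_mul (heq : IsDEquilibrium M (h / M) B) (hM : 0 < M)
    (hB : (support B).Finite) (hh : 0 < h)
    (hpairs : ∀ j ≤ 2 * h, wpPure B j + wpPure B (2 * h - j) = 0) :
    ∃ lam : ℝ, ∀ j ≤ 2 * h, wpPure B j = (h - j) * lam := by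
  have hcross : ∀ j j', j < h → j' < h → (h - j' : ℝ) * wpPure B j ≤ (h - j) * wpPure B j' := by
    intro j j' hj hj'
    have hjR : (j : ℝ) < h := by exact_mod_cast hj
    have hj'R : (j' : ℝ) < h := by exact_mod_cast hj'
    have hcast : ((2 * h - j : ℕ) : ℝ) = 2 * h - j := by
      push_cast [Nat.cast_sub (show j ≤ 2 * h by omega)]
      ring
    have htest := heq.twoPoint_nonneg hM hB (a := h - j) (b := h - j') (i := j') (j := 2 * h - j)
      (by linarith) (by linarith) (by linarith) (by rw [hcast]; nlinarith)
    have hrefl := hpairs j (by omega)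
    nlinarith
  refine ⟨wpPure B 0 / h, ?_⟩
  have hhR : (0 : ℝ) < h := by exact_mod_cast hh
  have hlow : ∀ j ≤ h, wpPure B j = (h - j) * (wpPure B 0 / h) := by
    intro j hj
    rcases hj.lt_or_eq with hj | rfl
    · have h1 := hcross j 0 hj hh
      have h2 := hcross 0 j hh hj
      field_simp
      push_cast at h1 h2
      linarith
    · have := hpairs j (by omega)
      rw [show 2 * j - j = j by omega] at this
      simp only [sub_self, zero_mul]
      linarith
  intro j hj
  rcases le_total j h with hjh | hhj
  · exact hlow j hjh
  · have hcast : ((2 * h - j : ℕ) : ℝ) = 2 * h - j := by push_cast [Nat.cast_sub hj]; ring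
    have h1 := hlow (2 * h - j) (by omega)
    have h2 := hpairs j hj
    rw [hcast] at h1
    linarith

end Equilibrium

theorem stmt4 (M k : ℕ) (hM : 0 < M) (hk : 0 < k) (heven : Even k)
    (C : ℝ) (hC : C = (k : ℝ) / (2 * M))
    (B : ℕ → ℝ) (hB : IsDStrategy B) (hBC : mcaD M B ≤ C) :
    (∀ B' : ℕ → ℝ, IsDStrategy B' → mcaD M B' ≤ C → 0 ≤ wpD B B') ↔
      (mcaD M B = C ∧ (∀ j ≤ k, Even j → B j = B 0) ∧
        (∀ j ≤ k, Odd j → B j = B 1) ∧ (∀ j > k, B j = 0)) := by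
  obtain ⟨h, rfl⟩ := heven
  have hCh : C = h / M := by
    rw [hC]
    push_cast
    field_simp
    ring
  subst hCh
  rw [← two_mul] at hk ⊢
  change IsDEquilibrium M (h / M) B ↔ _
  constructor
  · intro heq
    obtain ⟨hmca, hzero, hpairs⟩ := heq.mcaD_eq_and_eq_zero hM hB hBC
    obtain ⟨lam, hlin⟩ := heq.exists_wpPure_eq_mul hM hB.2.1 (by omega) hpairs
    have hsucc := add_succ_eq_of_wpPure_eq_mul hB.2.1 hlin
    have hlam : lam = B 0 + B 1 := (hsucc 0 hk).symm
    obtain ⟨heven, hodd⟩ := add_succ_eq_iff_parity.1 (hlam ▸ hsucc)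
    exact ⟨hmca, heven, hodd, hzero⟩
  · rintro ⟨-, heven, hodd, hzero⟩
    exact isDEquilibrium_of_alternating hM hB.1 hB.2.1
      (add_succ_eq_iff_parity.2 ⟨heven, hodd⟩) hzero
end

section
/- Let the constraint value be C = 1/2 and let u be a bounded measurable strategy equal to a positive constant on [0, 1] and zero outside [0, 1]. Then for every bounded measurable strategy g supported in [0, 1] with mca(g) ≤ 1/2, one has wp(u; g) = (∫₀¹ u)(∫₀¹ g)(1 − 2·mca(g)) ≥ 0; in particular, any pair of strategies that are positive constants on [0, 1] and zero elsewhere is an equilibrium point of the bounded measurable game. -/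
/-! Against the uniform strategy `U = c · 1_[0,1]` a strategy `f` scores
`wp f U = c ∫ (2 min(x, 1) - 1) f(x) dx`. Since `min(x, 1) ≤ x`, this is at most
`c ∫ (2x - 1) f(x) dx = c (∫ f) (2 mca f - 1)`, which is `≤ 0` when `mca f ≤ 1/2`, with equality
for `f` supported in `[0, 1]`. In particular two uniform strategies tie. The payoff is
antisymmetric, `wp f g = -wp g f`, because it integrates `f(x) g(t) sign(x - t)` and ties
`x = t` are null; so `wp U g = -wp g U`, which gives the formula for `wp U g`. -/

open MeasureTheory Set

/-- Mean competitive ability of a function supported in `[0, ∞)`: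
`mca f = (∫₀^∞ t f(t) dt) / (∫₀^∞ f(t) dt)`. -/
noncomputable def mca (f : ℝ → ℝ) : ℝ :=
  (∫ t in Ioi (0:ℝ), t * f t) / (∫ t in Ioi (0:ℝ), f t)

/-- Payoff of `f` against `g`:
`wp f g = ∫₀^∞ f(x) (∫₀ˣ g(t) dt − ∫ₓ^∞ g(t) dt) dx`. -/
noncomputable def wp (f g : ℝ → ℝ) : ℝ :=
  ∫ x in Ioi (0:ℝ), f x * ((∫ t in Ioc (0:ℝ) x, g t) - ∫ t in Ioi x, g t)

/-- A bounded measurable strategy: measurable, bounded, nonnegative, compactly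
supported in `[0, ∞)`, and not almost everywhere zero. -/
def IsStrategy (f : ℝ → ℝ) : Prop :=
  Measurable f ∧ (∃ Cb : ℝ, ∀ x, f x ≤ Cb) ∧ (∀ x, 0 ≤ f x) ∧
  (∃ R : ℝ, Function.support f ⊆ Icc 0 R) ∧ ¬ f =ᵐ[volume] (0 : ℝ → ℝ)

lemma Real.measurable_sign : Measurable Real.sign :=
  Measurable.ite (measurableSet_lt measurable_id measurable_const) measurable_const <|
    Measurable.ite (measurableSet_lt measurable_const measurable_id) measurable_const
      measurable_const

namespace IsStrategy

variable {f : ℝ → ℝ}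

lemma integrable_continuous_mul {h : ℝ → ℝ} (hh : Continuous h) (hf : IsStrategy f) :
    Integrable fun t => h t * f t := by
  obtain ⟨hm, ⟨B, hB⟩, hnn, ⟨R, hR⟩, -⟩ := hf
  have hfR : IntegrableOn f (Icc 0 R) :=
    IntegrableOn.of_bound measure_Icc_lt_top hm.aestronglyMeasurable B
      (ae_of_all _ fun x => by rw [Real.norm_of_nonneg (hnn x)]; exact hB x)
  refine (integrableOn_iff_integrable_of_support_subset ?_).1
    (hfR.continuousOn_mul hh.continuousOn isCompact_Icc)
  exact (Function.support_mul_subset_right _ _).trans hR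

lemma nonneg (hf : IsStrategy f) : 0 ≤ f := hf.2.2.1

lemma integrable (hf : IsStrategy f) : Integrable f := by
  simpa using hf.integrable_continuous_mul continuous_const (h := fun _ => 1)

lemma setIntegral_Ioi_zero (hf : IsStrategy f) : ∫ t in Ioi 0, f t = ∫ t, f t := by
  obtain ⟨-, -, -, ⟨R, hR⟩, -⟩ := hf
  refine setIntegral_eq_integral_of_ae_compl_eq_zero ?_
  filter_upwards [volume.ae_ne 0] with t ht0 ht
  exact Function.notMem_support.1 fun hs => ht ((hR hs).1.lt_of_ne' ht0)

lemma integral_pos (hf : IsStrategy f) : 0 < ∫ t in Ioi 0, f t := by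
  rw [hf.setIntegral_Ioi_zero]
  refine (integral_nonneg hf.nonneg).lt_of_ne fun h0 => hf.2.2.2.2 ?_
  exact (integral_eq_zero_iff_of_nonneg hf.nonneg hf.integrable).1 h0.symm

end IsStrategy

section Antisymmetry

variable {f g : ℝ → ℝ}

lemma integral_Ioc_sub_integral_Ioi_eq_integral_sign (hg : IntegrableOn g (Ioi 0)) {x : ℝ}
    (hx : 0 < x) :
    (∫ t in Ioc 0 x, g t) - ∫ t in Ioi x, g t = ∫ t in Ioi 0, Real.sign (x - t) * g t := by
  have hsg : IntegrableOn (fun t => Real.sign (x - t) * g t) (Ioi 0) := by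
    refine hg.bdd_mul (c := 1) ?_ (ae_of_all _ fun t => ?_)
    · exact (Real.measurable_sign.comp (measurable_const.sub measurable_id)).aestronglyMeasurable
    · rcases Real.sign_apply_eq (x - t) with h | h | h <;> simp [h]
  have hlt : ∫ t in Ioc 0 x, Real.sign (x - t) * g t = ∫ t in Ioc 0 x, g t := by
    simp only [← setIntegral_congr_set Ioo_ae_eq_Ioc]
    refine setIntegral_congr_fun measurableSet_Ioo fun t ht => ?_
    rw [Real.sign_of_pos (sub_pos.2 ht.2), one_mul]
  have hgt : ∫ t in Ioi x, Real.sign (x - t) * g t = -∫ t in Ioi x, g t := by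
    rw [← integral_neg]
    refine setIntegral_congr_fun measurableSet_Ioi fun t ht => ?_
    rw [Real.sign_of_neg (sub_neg.2 ht), neg_one_mul]
  rw [← Ioc_union_Ioi_eq_Ioi hx.le, setIntegral_union Ioc_disjoint_Ioi_same measurableSet_Ioi
    (hsg.mono_set Ioc_subset_Ioi_self) (hsg.mono_set (Ioi_subset_Ioi hx.le)), hlt, hgt,
    sub_eq_add_neg]

lemma wp_eq_integral_integral_sign (hg : IntegrableOn g (Ioi 0)) :
    wp f g = ∫ x in Ioi 0, ∫ t in Ioi 0, f x * g t * Real.sign (x - t) := by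
  refine setIntegral_congr_fun measurableSet_Ioi fun x hx => ?_
  rw [integral_Ioc_sub_integral_Ioi_eq_integral_sign hg hx, ← integral_const_mul]
  congr 1 with t
  ring

theorem wp_antisymm (hf : IntegrableOn f (Ioi 0)) (hg : IntegrableOn g (Ioi 0)) :
    wp f g = -wp g f := by
  have hint : Integrable (Function.uncurry fun x t => f x * g t * Real.sign (x - t))
      ((volume.restrict (Ioi 0)).prod (volume.restrict (Ioi 0))) := by
    refine (hf.mul_prod hg).mul_bdd (c := 1) ?_ (ae_of_all _ fun p => ?_)
    · exact (Real.measurable_sign.comp (measurable_fst.sub measurable_snd)).aestronglyMeasurable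
    · rcases Real.sign_apply_eq (p.1 - p.2) with h | h | h <;> simp [h]
  rw [wp_eq_integral_integral_sign hg, wp_eq_integral_integral_sign hf,
    integral_integral_swap hint, ← integral_neg]
  refine integral_congr_ae (ae_of_all _ fun t => ?_)
  simp only
  rw [← integral_neg]
  congr 1 with x
  rw [← neg_sub, Real.sign_neg]
  ring

end Antisymmetry

noncomputable def uniformStrategy (c : ℝ) : ℝ → ℝ := (Icc 0 1).indicator fun _ => c

lemma eq_uniformStrategy {u : ℝ → ℝ} {c : ℝ} (huc : ∀ x ∈ Icc (0:ℝ) 1, u x = c)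
    (hu0 : ∀ x, x ∉ Icc (0:ℝ) 1 → u x = 0) : u = uniformStrategy c := by
  funext x
  by_cases hx : x ∈ Icc (0:ℝ) 1
  · rw [huc x hx, uniformStrategy, indicator_of_mem hx]
  · rw [hu0 x hx, uniformStrategy, indicator_of_notMem hx]

namespace uniformStrategy

variable (c : ℝ)

lemma integrable : Integrable (uniformStrategy c) :=
  (integrable_indicator_iff measurableSet_Icc).2 (integrableOn_const measure_Icc_lt_top.ne)

lemma setIntegral_Icc : ∫ x in Icc 0 1, uniformStrategy c x = c := by
  rw [uniformStrategy, setIntegral_indicator measurableSet_Icc, inter_self]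
  simp

lemma setIntegral_Ioc {x : ℝ} (hx : 0 ≤ x) :
    ∫ t in Ioc 0 x, uniformStrategy c t = c * min x 1 := by
  rw [uniformStrategy, setIntegral_indicator measurableSet_Icc]
  have : Ioc 0 x ∩ Icc 0 1 = Ioc 0 (min x 1) := by
    ext t; simp only [mem_inter_iff, mem_Ioc, mem_Icc, le_min_iff]; grind
  simp [this, hx, mul_comm]

lemma setIntegral_Ioi_zero : ∫ t in Ioi 0, uniformStrategy c t = c := by
  rw [uniformStrategy, setIntegral_indicator measurableSet_Icc]
  have : Ioi 0 ∩ Icc 0 1 = Ioc (0:ℝ) 1 := by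
    ext t; simp only [mem_inter_iff, mem_Ioi, mem_Ioc, mem_Icc]; grind
  simp [this]

end uniformStrategy

lemma wp_uniformStrategy_right (f : ℝ → ℝ) (c : ℝ) :
    wp f (uniformStrategy c) = c * ∫ x in Ioi 0, (2 * min x 1 - 1) * f x := by
  rw [wp, ← integral_const_mul]
  refine setIntegral_congr_fun measurableSet_Ioi fun x (hx : 0 < x) => ?_
  have htail := intervalIntegral.integral_Ioi_sub_Ioi (uniformStrategy.integrable c).integrableOn
    hx.le
  rw [intervalIntegral.integral_of_le hx.le, uniformStrategy.setIntegral_Ioc c hx.le,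
    uniformStrategy.setIntegral_Ioi_zero] at htail
  rw [uniformStrategy.setIntegral_Ioc c hx.le]
  linear_combination f x * htail

lemma wp_uniformStrategy_uniformStrategy (c d : ℝ) :
    wp (uniformStrategy c) (uniformStrategy d) = 0 := by
  rw [wp_uniformStrategy_right]
  have hind : (fun x => (2 * min x 1 - 1) * uniformStrategy c x) =
      (Icc 0 1).indicator fun x => (2 * min x 1 - 1) * c :=
    funext fun x => (indicator_mul_right (Icc 0 1) (fun x => 2 * min x 1 - 1) _).symm
  rw [hind, setIntegral_indicator measurableSet_Icc]
  have : Ioi 0 ∩ Icc 0 1 = Ioc (0:ℝ) 1 := by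
    ext t; simp only [mem_inter_iff, mem_Ioi, mem_Ioc, mem_Icc]; grind
  rw [this, setIntegral_congr_fun measurableSet_Ioc fun x hx => by rw [min_eq_left hx.2],
    ← intervalIntegral.integral_of_le zero_le_one, intervalIntegral.integral_mul_const,
    intervalIntegral.integral_sub (intervalIntegral.intervalIntegrable_id.const_mul 2)
      intervalIntegrable_const, intervalIntegral.integral_const_mul]
  norm_num

namespace IsStrategy

variable {g : ℝ → ℝ}

lemma integral_two_mul_sub_one_mul (hg : IsStrategy g) :
    ∫ x in Ioi 0, (2 * x - 1) * g x = (∫ x in Ioi 0, g x) * (2 * mca g - 1) := by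
  have hT := hg.integral_pos
  have hM : IntegrableOn (fun x => x * g x) (Ioi 0) :=
    (hg.integrable_continuous_mul continuous_id).integrableOn
  simp only [sub_mul, mul_assoc, one_mul]
  rw [integral_sub (hM.const_mul 2) hg.integrable.integrableOn, integral_const_mul, mca]
  field_simp

lemma integral_two_mul_sub_one_mul_nonpos (hg : IsStrategy g) (hm : mca g ≤ 1 / 2) :
    ∫ x in Ioi 0, (2 * x - 1) * g x ≤ 0 := by
  rw [hg.integral_two_mul_sub_one_mul]
  exact mul_nonpos_of_nonneg_of_nonpos hg.integral_pos.le (by linarith)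

lemma wp_uniformStrategy_nonpos (hg : IsStrategy g) (hm : mca g ≤ 1 / 2) {c : ℝ} (hc : 0 ≤ c) :
    wp g (uniformStrategy c) ≤ 0 := by
  rw [wp_uniformStrategy_right]
  refine mul_nonpos_of_nonneg_of_nonpos hc
    (le_trans (setIntegral_mono_on ?_ ?_ measurableSet_Ioi fun x _ => ?_)
      (hg.integral_two_mul_sub_one_mul_nonpos hm))
  · exact (hg.integrable_continuous_mul (by fun_prop)).integrableOn
  · exact (hg.integrable_continuous_mul (by fun_prop)).integrableOn
  · exact mul_le_mul_of_nonneg_right (by linarith [min_le_left x 1]) (hg.nonneg x)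

lemma wp_uniformStrategy_left (hg : IsStrategy g) (hgs : Function.support g ⊆ Icc 0 1) (c : ℝ) :
    wp (uniformStrategy c) g = -c * ∫ x in Ioi 0, (2 * x - 1) * g x := by
  rw [wp_antisymm (uniformStrategy.integrable c).integrableOn hg.integrable.integrableOn,
    wp_uniformStrategy_right, neg_mul]
  congr 2
  refine setIntegral_congr_fun measurableSet_Ioi fun x _ => ?_
  by_cases hx : g x = 0
  · simp [hx]
  · rw [min_eq_left (hgs hx).2]

end IsStrategy

theorem stmt9_general (u : ℝ → ℝ) (c : ℝ) (hc : 0 < c)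
    (huc : ∀ x ∈ Icc (0:ℝ) 1, u x = c) (hu0 : ∀ x, x ∉ Icc (0:ℝ) 1 → u x = 0) :
    (∀ g : ℝ → ℝ, IsStrategy g → Function.support g ⊆ Icc (0:ℝ) 1 → mca g ≤ 1/2 →
      wp u g = (∫ x in Icc (0:ℝ) 1, u x) * (∫ x in Icc (0:ℝ) 1, g x) * (1 - 2 * mca g) ∧
      0 ≤ wp u g) ∧
    (∀ u₂ : ℝ → ℝ, IsStrategy u₂ →
      (∃ c₂ : ℝ, 0 < c₂ ∧ (∀ x ∈ Icc (0:ℝ) 1, u₂ x = c₂) ∧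
        (∀ x, x ∉ Icc (0:ℝ) 1 → u₂ x = 0)) →
      ∀ g : ℝ → ℝ, IsStrategy g → mca g ≤ 1/2 →
        wp g u₂ ≤ wp u u₂ ∧ wp g u ≤ wp u₂ u) := by
  obtain rfl := eq_uniformStrategy huc hu0
  refine ⟨fun g hg hgs hm => ?_, ?_⟩
  · have hIg : ∫ x in Icc 0 1, g x = ∫ x in Ioi 0, g x := by
      rw [hg.setIntegral_Ioi_zero, setIntegral_eq_integral_of_forall_compl_eq_zero
        fun x hx => Function.notMem_support.1 fun h => hx (hgs h)]
    rw [hg.wp_uniformStrategy_left hgs, uniformStrategy.setIntegral_Icc, hIg]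
    refine ⟨by rw [hg.integral_two_mul_sub_one_mul]; ring, ?_⟩
    exact mul_nonneg_of_nonpos_of_nonpos (neg_nonpos.2 hc.le)
      (hg.integral_two_mul_sub_one_mul_nonpos hm)
  · rintro u₂ - ⟨c₂, hc₂, huc₂, hu₂0⟩ g hg hm
    obtain rfl := eq_uniformStrategy huc₂ hu₂0
    simp only [wp_uniformStrategy_uniformStrategy]
    exact ⟨hg.wp_uniformStrategy_nonpos hm hc₂.le, hg.wp_uniformStrategy_nonpos hm hc.le⟩

theorem stmt9 (u : ℝ → ℝ) (hu : IsStrategy u) (c : ℝ) (hc : 0 < c)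
    (huc : ∀ x ∈ Icc (0:ℝ) 1, u x = c) (hu0 : ∀ x, x ∉ Icc (0:ℝ) 1 → u x = 0) :
    (∀ g : ℝ → ℝ, IsStrategy g → Function.support g ⊆ Icc (0:ℝ) 1 → mca g ≤ 1/2 →
      wp u g = (∫ x in Icc (0:ℝ) 1, u x) * (∫ x in Icc (0:ℝ) 1, g x) * (1 - 2 * mca g) ∧
      0 ≤ wp u g) ∧
    (∀ u₂ : ℝ → ℝ, IsStrategy u₂ →
      (∃ c₂ : ℝ, 0 < c₂ ∧ (∀ x ∈ Icc (0:ℝ) 1, u₂ x = c₂) ∧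
        (∀ x, x ∉ Icc (0:ℝ) 1 → u₂ x = 0)) →
      ∀ g : ℝ → ℝ, IsStrategy g → mca g ≤ 1/2 →
        wp g u₂ ≤ wp u u₂ ∧ wp g u ≤ wp u₂ u) :=
  stmt9_general u c hc huc hu0
end

section
/- Let the constraint value be C = 1/2 and let f be a bounded measurable strategy supported in [0, 1] with mca(f) ≤ 1/2. If f is not almost everywhere equal to a constant on [0, 1], then there exists a bounded measurable strategy g supported in [0, 1] with mca(g) ≤ 1/2 such that wp(f; g) < 0. -/
open MeasureTheory Set

/-!
By Fubini, `wp f g = ∫ g(t) (I - 2 F(t)) dt`, where `F` is the primitive of `f` and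
`I = F(1)` its mass. Computing the payoff of `f` against the uniform strategy both ways gives
`∫₀¹ F = I - ∫ t f(t) dt ≥ I / 2 = ∫₀¹ t I dt`, so if the continuous curve `F` stayed below
the line `t ↦ t I` on `[0, 1]` it would coincide with it, and `f` would be the constant `I`
almost everywhere. Hence `F(a) > a I` at some `a`, i.e. `I - 2 F(a) < (1 - 2a) I`. A step
strategy with mass `1` just left of `a`, balanced by masses `(1 - 2a)⁺` near `1` and
`(1 - 2a)⁻` near `0` so that its mean stays below `1/2`, then beats `f`.
-/

open Filter Topology

section Payoff

variable {f g : ℝ → ℝ}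

lemma setIntegral_Ioi_eq_add (hg : IntegrableOn g (Ioi 0)) {x : ℝ} (hx : 0 ≤ x) :
    ∫ t in Ioi 0, g t = (∫ t in Ioc 0 x, g t) + ∫ t in Ioi x, g t := by
  have h := setIntegral_union (μ := volume) (f := g) (s := Ioc 0 x) (t := Ioi x)
    Ioc_disjoint_Ioi_same measurableSet_Ioi (hg.mono_set Ioc_subset_Ioi_self)
    (hg.mono_set (Ioi_subset_Ioi hx))
  rwa [Ioc_union_Ioi_eq_Ioi hx] at h

lemma integrableOn_mul_ite (hg : IntegrableOn g (Ioi 0)) {p : ℝ → Prop} [DecidablePred p]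
    (hp : MeasurableSet {t | p t}) :
    IntegrableOn (fun t => g t * if p t then 1 else -1) (Ioi 0) :=
  hg.mul_bdd (c := 1)
    ((Measurable.ite hp measurable_const measurable_const).aestronglyMeasurable)
    (ae_of_all _ fun t => by split_ifs <;> simp)

lemma integral_mul_sign_left (hg : IntegrableOn g (Ioi 0)) {x : ℝ} (hx : 0 < x) :
    ∫ t in Ioi 0, g t * (if t ≤ x then 1 else -1)
      = (∫ t in Ioc 0 x, g t) - ∫ t in Ioi x, g t := by
  have hle : ∫ t in Ioc 0 x, g t * (if t ≤ x then 1 else -1) = ∫ t in Ioc 0 x, g t :=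
    setIntegral_congr_fun measurableSet_Ioc fun t ht => by simp [ht.2]
  have hgt : ∫ t in Ioi x, g t * (if t ≤ x then 1 else -1) = ∫ t in Ioi x, -g t :=
    setIntegral_congr_fun measurableSet_Ioi fun t ht => by simp [not_le.2 (mem_Ioi.1 ht)]
  rw [setIntegral_Ioi_eq_add (integrableOn_mul_ite hg measurableSet_Iic) hx.le, hle, hgt,
    integral_neg, sub_eq_add_neg]

lemma integral_mul_sign_right (hf : IntegrableOn f (Ioi 0)) {t : ℝ} (ht : 0 < t) :
    ∫ x in Ioi 0, f x * (if t ≤ x then 1 else -1)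
      = (∫ x in Ioi 0, f x) - 2 * ∫ x in Ioc 0 t, f x := by
  have hi := integrableOn_mul_ite hf (p := fun x => t ≤ x) measurableSet_Ici
  have hsplit := setIntegral_union (μ := volume) (s := Ioo 0 t) (t := Ici t)
    ((Iio_disjoint_Ici le_rfl).mono_left Ioo_subset_Iio_self) measurableSet_Ici
    (hi.mono_set Ioo_subset_Ioi_self) (hi.mono_set (Ici_subset_Ioi.2 ht))
  rw [Ioo_union_Ici_eq_Ioi ht] at hsplit
  have hlt : ∫ x in Ioo 0 t, f x * (if t ≤ x then 1 else -1) = -∫ x in Ioc 0 t, f x := by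
    rw [integral_Ioc_eq_integral_Ioo, ← integral_neg]
    exact setIntegral_congr_fun measurableSet_Ioo fun x hx => by simp [not_le.2 hx.2]
  have hge : ∫ x in Ici t, f x * (if t ≤ x then 1 else -1) = ∫ x in Ioi t, f x := by
    rw [← integral_Ici_eq_integral_Ioi]
    exact setIntegral_congr_fun measurableSet_Ici fun x hx => by simp [mem_Ici.1 hx]
  rw [hsplit, hlt, hge, setIntegral_Ioi_eq_add hf ht.le]
  ring

/-- The payoff of `f` against a unit point mass at `t > 0`. -/
noncomputable def pointPayoff (f : ℝ → ℝ) (t : ℝ) : ℝ :=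
  (∫ x in Ioi 0, f x) - 2 * ∫ x in 0..t, f x

theorem wp_eq_integral_mul (hf : IntegrableOn f (Ioi 0)) (hg : IntegrableOn g (Ioi 0)) :
    wp f g = ∫ t in Ioi 0, g t * pointPayoff f t := by
  have hK : Integrable (fun z : ℝ × ℝ => f z.1 * (g z.2 * if z.2 ≤ z.1 then 1 else -1))
      ((volume.restrict (Ioi 0)).prod (volume.restrict (Ioi 0))) := by
    simp_rw [← mul_assoc]
    exact (hf.mul_prod hg).mul_bdd (c := 1) ((Measurable.ite (measurableSet_le measurable_snd
      measurable_fst) measurable_const measurable_const).aestronglyMeasurable)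
      (ae_of_all _ fun z => by split_ifs <;> simp)
  -- `wp f g` is the integral of `f x * g t * sign (x - t)` over the quadrant (with `sign 0 = 1`)
  calc wp f g = ∫ x in Ioi 0, ∫ t in Ioi 0, f x * (g t * if t ≤ x then 1 else -1) := by
        refine setIntegral_congr_fun measurableSet_Ioi fun x hx => ?_
        rw [integral_const_mul, integral_mul_sign_left hg hx]
    _ = ∫ t in Ioi 0, ∫ x in Ioi 0, f x * (g t * if t ≤ x then 1 else -1) :=
        integral_integral_swap hK
    _ = _ := by
        refine setIntegral_congr_fun measurableSet_Ioi fun t ht => ?_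
        simp_rw [mul_left_comm (f _), integral_const_mul]
        rw [integral_mul_sign_right hf ht, pointPayoff, intervalIntegral.integral_of_le ht.le]

end Payoff

section Strategy

variable {f : ℝ → ℝ}

lemma IsStrategy.integrable_s10 (hf : IsStrategy f) : Integrable f := by
  obtain ⟨hm, ⟨C, hC⟩, hnn, ⟨R, hR⟩, -⟩ := hf
  refine (IntegrableOn.of_bound measure_Icc_lt_top hm.aestronglyMeasurable C
    (ae_of_all _ fun x => ?_)).integrable_of_forall_notMem_eq_zero
    fun x hx => Function.notMem_support.1 fun h => hx (hR h)
  rw [Real.norm_of_nonneg (hnn x)]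
  exact hC x

lemma IsStrategy.integral_pos_s10 (hf : IsStrategy f) : 0 < ∫ x in Ioi 0, f x := by
  have hfi := hf.integrable_s10
  obtain ⟨-, -, hnn, ⟨R, hR⟩, hne⟩ := hf
  have hcompl : ∀ᵐ x, x ∉ Ioi (0:ℝ) → f x = 0 := by
    filter_upwards [compl_mem_ae_iff.2 (measure_singleton (0:ℝ))] with x hx0 hx
    exact Function.notMem_support.1 fun h =>
      hx (lt_of_le_of_ne (hR h).1 (Ne.symm hx0))
  rw [setIntegral_eq_integral_of_ae_compl_eq_zero hcompl,
    integral_pos_iff_support_of_nonneg hnn hfi]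
  exact pos_iff_ne_zero.2 (mt (Measure.measure_support_eq_zero_iff volume).1 hne)

lemma mca_le_iff {c : ℝ} (h : 0 < ∫ x in Ioi 0, f x) :
    mca f ≤ c ↔ ∫ x in Ioi 0, x * f x ≤ c * ∫ x in Ioi 0, f x :=
  div_le_iff₀ h

end Strategy

section StepFunction

variable {ι : Type*} [Fintype ι] {s t c : ι → ℝ}

noncomputable def stepFunction (s t c : ι → ℝ) (x : ℝ) : ℝ :=
  ∑ i, (Ioc (s i) (t i)).indicator (fun _ => c i) x

lemma measurable_stepFunction : Measurable (stepFunction s t c) :=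
  Finset.measurable_sum _ fun _ _ => measurable_const.indicator measurableSet_Ioc

lemma integrable_stepFunction : Integrable (stepFunction s t c) :=
  integrable_finsetSum _ fun _ _ =>
    (integrable_indicator_iff measurableSet_Ioc).2 (integrableOn_const measure_Ioc_lt_top.ne)

lemma stepFunction_nonneg (hc : ∀ i, 0 ≤ c i) (x : ℝ) : 0 ≤ stepFunction s t c x :=
  Finset.sum_nonneg fun i _ => indicator_nonneg (fun _ _ => hc i) x

lemma stepFunction_le_sum (hc : ∀ i, 0 ≤ c i) (x : ℝ) : stepFunction s t c x ≤ ∑ i, c i :=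
  Finset.sum_le_sum fun i _ => indicator_le_self' (fun _ _ => hc i) x

lemma support_stepFunction_subset {a b : ℝ} (hs : ∀ i, a ≤ s i) (ht : ∀ i, t i ≤ b) :
    Function.support (stepFunction s t c) ⊆ Icc a b := by
  intro x hx
  obtain ⟨i, -, hi⟩ := Finset.exists_ne_zero_of_sum_ne_zero hx
  have hxi : x ∈ Ioc (s i) (t i) := by
    by_contra h
    exact hi (indicator_of_notMem h _)
  exact ⟨(hs i).trans hxi.1.le, hxi.2.trans (ht i)⟩

lemma isStrategy_stepFunction (hs : ∀ i, 0 ≤ s i) (hc : ∀ i, 0 ≤ c i)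
    (hpos : 0 < ∫ x in Ioi 0, stepFunction s t c x) : IsStrategy (stepFunction s t c) :=
  ⟨measurable_stepFunction, ⟨_, stepFunction_le_sum hc⟩, stepFunction_nonneg hc,
    ⟨∑ i, |t i|, support_stepFunction_subset hs fun i => (le_abs_self _).trans
      (Finset.single_le_sum (fun j _ => abs_nonneg (t j)) (Finset.mem_univ i))⟩,
    fun h => hpos.ne' (integral_eq_zero_of_ae (ae_restrict_of_ae h))⟩

lemma setIntegral_indicator_const_mul {a b c : ℝ} (ha : 0 ≤ a) (h : ℝ → ℝ) :
    ∫ x in Ioi 0, (Ioc a b).indicator (fun _ => c) x * h x = c * ∫ x in Ioc a b, h x := by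
  simp_rw [← indicator_mul_left]
  rw [setIntegral_indicator measurableSet_Ioc,
    inter_eq_right.2 (Ioc_subset_Ioi_self.trans (Ioi_subset_Ioi ha)), integral_const_mul]

lemma integral_stepFunction_mul (hs : ∀ i, 0 ≤ s i) {h : ℝ → ℝ}
    (hh : ∀ i, IntegrableOn h (Ioc (s i) (t i))) :
    ∫ x in Ioi 0, stepFunction s t c x * h x = ∑ i, c i * ∫ x in Ioc (s i) (t i), h x := by
  simp_rw [stepFunction, Finset.sum_mul]
  rw [integral_finsetSum _ fun i _ => ?_]
  · exact Finset.sum_congr rfl fun i _ => setIntegral_indicator_const_mul (hs i) h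
  simp_rw [← indicator_mul_left]
  exact (IntegrableOn.integrable_indicator ((hh i).const_mul (c i))
    measurableSet_Ioc).integrableOn

lemma integral_stepFunction (hs : ∀ i, 0 ≤ s i) (hst : ∀ i, s i ≤ t i) :
    ∫ x in Ioi 0, stepFunction s t c x = ∑ i, c i * (t i - s i) := by
  simpa [Real.volume_real_Ioc_of_le (hst _)] using
    integral_stepFunction_mul (t := t) (c := c) hs (h := 1)
      fun _ => integrableOn_const measure_Ioc_lt_top.ne

lemma integral_mul_stepFunction (hs : ∀ i, 0 ≤ s i) (hst : ∀ i, s i ≤ t i) :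
    ∫ x in Ioi 0, x * stepFunction s t c x = ∑ i, c i * ((t i ^ 2 - s i ^ 2) / 2) := by
  simp_rw [mul_comm _ (stepFunction s t c _)]
  rw [integral_stepFunction_mul hs (h := fun x => x) fun i => continuous_id.integrableOn_Ioc]
  simp_rw [← intervalIntegral.integral_of_le (hst _), integral_id]

end StepFunction

section Primitive

variable {f : ℝ → ℝ}

lemma ae_eq_of_intervalIntegral_eq_mul {a b c : ℝ} (hf : IntervalIntegrable f volume a b)
    (h : ∀ x ∈ Icc a b, ∫ t in a..x, f t = (x - a) * c) :
    ∀ᵐ x ∂volume.restrict (Icc a b), f x = c := by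
  have hne : ∀ y : ℝ, ∀ᵐ x, x ≠ y := fun y => compl_mem_ae_iff.2 (measure_singleton y)
  rw [ae_restrict_iff' measurableSet_Icc]
  filter_upwards [hf.ae_hasDerivAt_integral, hne a, hne b] with x hderiv hxa hxb hx
  have hlin : HasDerivAt (fun y => ∫ t in a..y, f t) c x := by
    refine ((((hasDerivAt_id x).sub_const a).mul_const c).congr_of_eventuallyEq ?_).congr_deriv
      (one_mul c)
    filter_upwards [Ioo_mem_nhds (lt_of_le_of_ne hx.1 hxa.symm) (lt_of_le_of_ne hx.2 hxb)]
      with y hy using h y (Ioo_subset_Icc_self hy)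
  exact (hderiv (by rwa [uIcc_of_le (hx.1.trans hx.2)]) a left_mem_uIcc).unique hlin

lemma intervalIntegral_zero_one_eq (hs : Function.support f ⊆ Icc 0 1) :
    ∫ x in 0..1, f x = ∫ x in Ioi 0, f x := by
  rw [intervalIntegral.integral_of_le zero_le_one,
    setIntegral_eq_of_subset_of_forall_sdiff_eq_zero measurableSet_Ioi Ioc_subset_Ioi_self]
  exact fun x hx => Function.notMem_support.1 fun h => hx.2 ⟨hx.1, (hs h).2⟩

lemma wp_indicator_Ioc_zero_one (hf : Integrable f) (hs : Function.support f ⊆ Icc 0 1) :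
    wp f ((Ioc 0 1).indicator fun _ => 1)
      = 2 * (∫ x in Ioi 0, x * f x) - ∫ x in Ioi 0, f x := by
  have hxf : Integrable fun x => x * f x := by
    refine hf.mono (continuous_id.aestronglyMeasurable.mul hf.aestronglyMeasurable)
      (ae_of_all _ fun x => ?_)
    by_cases hx : f x = 0
    · simp [hx]
    · have hx' := hs hx
      rw [norm_mul]
      exact mul_le_of_le_one_left (norm_nonneg _) (abs_le.2 ⟨by linarith [hx'.1], hx'.2⟩)
  set u : ℝ → ℝ := (Ioc 0 1).indicator fun _ => 1
  have key : ∀ x ∈ Ioi (0:ℝ),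
      f x * ((∫ t in Ioc 0 x, u t) - ∫ t in Ioi x, u t) = 2 * (x * f x) - f x := by
    intro x hx
    by_cases hx1 : x ≤ 1
    · simp [u, inter_eq_right.2 (Ioc_subset_Ioc_right hx1), hx1, le_of_lt (mem_Ioi.1 hx)]
      ring
    · simp [Function.notMem_support.1 fun h => hx1 (hs h).2]
  rw [wp, setIntegral_congr_fun measurableSet_Ioi key,
    integral_sub (hxf.integrableOn.const_mul 2) hf.integrableOn, integral_const_mul]

lemma integral_primitive_zero_one (hf : Integrable f) (hs : Function.support f ⊆ Icc 0 1) :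
    ∫ a in 0..1, ∫ x in 0..a, f x = (∫ x in Ioi 0, f x) - ∫ x in Ioi 0, x * f x := by
  have h := wp_eq_integral_mul (g := (Ioc 0 1).indicator fun _ => 1) hf.integrableOn
    ((integrable_indicator_iff measurableSet_Ioc).2 (integrableOn_const (C := (1:ℝ))
      measure_Ioc_lt_top.ne)).integrableOn
  rw [wp_indicator_Ioc_zero_one hf hs, setIntegral_indicator_const_mul le_rfl, one_mul,
    ← intervalIntegral.integral_of_le zero_le_one] at h
  simp only [pointPayoff] at h
  rw [intervalIntegral.integral_sub intervalIntegrable_const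
      ((hf.continuous_primitive 0).intervalIntegrable _ _ |>.const_mul 2),
    intervalIntegral.integral_const, intervalIntegral.integral_const_mul] at h
  simp at h
  linarith

theorem exists_mul_lt_primitive (hf : Integrable f) (hs : Function.support f ⊆ Icc 0 1)
    (hmean : ∫ x in Ioi 0, x * f x ≤ 1 / 2 * ∫ x in Ioi 0, f x)
    (hnc : ¬ ∃ c : ℝ, ∀ᵐ x ∂volume.restrict (Icc 0 1), f x = c) :
    ∃ a ∈ Icc (0:ℝ) 1, a * ∫ x in Ioi 0, f x < ∫ x in 0..a, f x := by
  by_contra! hle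
  have heq : ∀ a ∈ Icc (0:ℝ) 1, ∫ x in 0..a, f x = (a - 0) * ∫ x in Ioi 0, f x := by
    by_contra! hne
    obtain ⟨c, hc, hne⟩ := hne
    rw [sub_zero] at hne
    have hlt := intervalIntegral.integral_lt_integral_of_continuousOn_of_le_of_exists_lt
      (g := fun a => a * ∫ x in Ioi 0, f x) zero_lt_one (hf.continuous_primitive 0).continuousOn
      (continuous_id.mul continuous_const).continuousOn
      (fun x hx => hle x (Ioc_subset_Icc_self hx)) ⟨c, hc, (hle c hc).lt_of_ne hne⟩
    rw [integral_primitive_zero_one hf hs, intervalIntegral.integral_mul_const, integral_id] at hlt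
    linarith
  exact hnc ⟨_, ae_eq_of_intervalIntegral_eq_mul hf.intervalIntegrable heq⟩

lemma continuous_pointPayoff (hf : Integrable f) : Continuous (pointPayoff f) :=
  continuous_const.sub (continuous_const.mul (hf.continuous_primitive 0))

lemma pointPayoff_zero : pointPayoff f 0 = ∫ x in Ioi 0, f x := by
  simp [pointPayoff]

lemma pointPayoff_one (hs : Function.support f ⊆ Icc 0 1) :
    pointPayoff f 1 = -∫ x in Ioi 0, f x := by
  rw [pointPayoff, intervalIntegral_zero_one_eq hs]
  ring

end Primitive

section BalancedStep

variable {f : ℝ → ℝ} {a ε : ℝ}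

noncomputable def balancedStep (a ε : ℝ) : ℝ → ℝ :=
  stepFunction ![a - ε, 1 - ε, 0] ![a, 1, ε] ![1, (1 - 2 * a)⁺, (1 - 2 * a)⁻]

lemma isStrategy_balancedStep (hε : 0 < ε) (hεa : ε ≤ a) (ha : a ≤ 1) :
    IsStrategy (balancedStep a ε) ∧ Function.support (balancedStep a ε) ⊆ Icc 0 1 ∧
      mca (balancedStep a ε) ≤ 1 / 2 := by
  have hs : ∀ i, 0 ≤ ![a - ε, 1 - ε, 0] i := by
    intro i; fin_cases i <;> simp <;> linarith
  have hst : ∀ i, ![a - ε, 1 - ε, 0] i ≤ ![a, 1, ε] i := by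
    intro i; fin_cases i <;> simp <;> linarith
  have hc : ∀ i, 0 ≤ ![(1:ℝ), (1 - 2 * a)⁺, (1 - 2 * a)⁻] i := by
    intro i; fin_cases i <;> simp
  have hmass : ∫ x in Ioi 0, balancedStep a ε x
      = ε * (1 + (1 - 2 * a)⁺ + (1 - 2 * a)⁻) := by
    rw [balancedStep, integral_stepFunction hs hst]
    simp [Fin.sum_univ_three]
    ring
  have hmoment : ∫ x in Ioi 0, x * balancedStep a ε x
      = ε * (1 + (1 - 2 * a)⁺ + (1 - 2 * a)⁻) / 2 - ε ^ 2 * (1 - a) := by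
    rw [balancedStep, integral_mul_stepFunction hs hst]
    simp [Fin.sum_univ_three]
    linear_combination (ε / 2 - ε ^ 2 / 2) * posPart_sub_negPart (1 - 2 * a)
  have hpos : 0 < ∫ x in Ioi 0, balancedStep a ε x := by rw [hmass]; positivity
  refine ⟨isStrategy_stepFunction hs hc hpos, support_stepFunction_subset hs ?_,
    (mca_le_iff hpos).2 ?_⟩
  · intro i; fin_cases i <;> simp <;> linarith
  · rw [hmass, hmoment]
    nlinarith

lemma wp_balancedStep (hf : Integrable f) (hεa : ε ≤ a) (ha : a ≤ 1) :
    wp f (balancedStep a ε) = (∫ x in Ioc (a - ε) a, pointPayoff f x)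
      + (1 - 2 * a)⁺ * (∫ x in Ioc (1 - ε) 1, pointPayoff f x)
      + (1 - 2 * a)⁻ * ∫ x in Ioc 0 ε, pointPayoff f x := by
  have hs : ∀ i, 0 ≤ ![a - ε, 1 - ε, 0] i := by
    intro i; fin_cases i <;> simp <;> linarith
  rw [balancedStep, wp_eq_integral_mul hf.integrableOn integrable_stepFunction.integrableOn,
    integral_stepFunction_mul hs fun _ => (continuous_pointPayoff hf).integrableOn_Ioc]
  simp [Fin.sum_univ_three]

end BalancedStep

section Construction

variable {f : ℝ → ℝ}

lemma setIntegral_Ioc_le_of_le {h : ℝ → ℝ} {a b B : ℝ} (hab : a ≤ b)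
    (hh : IntegrableOn h (Ioc a b)) (hB : ∀ x ∈ Ioc a b, h x ≤ B) :
    ∫ x in Ioc a b, h x ≤ (b - a) * B := by
  calc ∫ x in Ioc a b, h x ≤ ∫ _ in Ioc a b, B :=
        setIntegral_mono_on hh (integrableOn_const measure_Ioc_lt_top.ne) measurableSet_Ioc hB
    _ = (b - a) * B := by rw [setIntegral_const, Real.volume_real_Ioc_of_le hab, smul_eq_mul]

lemma Continuous.eventually_setIntegral_Ioc_le {h : ℝ → ℝ} {b c : ℝ} (hh : Continuous h)
    (hc : h b < c) :
    ∀ᶠ ε in 𝓝 (0:ℝ), ∀ u v, b - ε ≤ u → u ≤ v → v ≤ b + ε →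
      ∫ x in Ioc u v, h x ≤ (v - u) * c := by
  filter_upwards [eventually_closedBall_subset (hh.continuousAt.preimage_mem_nhds
    (Iic_mem_nhds hc))] with ε hε u v hu huv hv
  refine setIntegral_Ioc_le_of_le huv hh.integrableOn_Ioc fun x hx => hε ?_
  rw [Real.closedBall_eq_Icc]
  exact ⟨hu.trans hx.1.le, hx.2.trans hv⟩

theorem exists_isStrategy_wp_neg (hf : Integrable f) (hs : Function.support f ⊆ Icc 0 1)
    {a : ℝ} (ha : a ∈ Icc 0 1) (hlt : a * ∫ x in Ioi 0, f x < ∫ x in 0..a, f x) :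
    ∃ g : ℝ → ℝ, IsStrategy g ∧ Function.support g ⊆ Icc 0 1 ∧ mca g ≤ 1 / 2 ∧ wp f g < 0 := by
  set I := ∫ x in Ioi 0, f x
  have ha0 : 0 < a := ha.1.lt_of_ne (by rintro rfl; simp at hlt)
  -- as `ε → 0`, `wp f (balancedStep a ε) / ε` tends to `-4 η`
  set η := ((1 - 2 * a) * I - pointPayoff f a) / 4 with hη_def
  have hη : 0 < η := by simp only [η, pointPayoff]; linarith
  have hnear (b : ℝ) := (continuous_pointPayoff hf).eventually_setIntegral_Ioc_le
    (lt_add_of_pos_right (pointPayoff f b) hη)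
  obtain ⟨ε, hε : 0 < ε, hεa, hφa, hφ0, hφ1⟩ :=
    ((eventually_mem_nhdsWithin (s := Ioi 0)).and
      (((eventually_lt_nhds ha0).and ((hnear a).and ((hnear 0).and (hnear 1)))).filter_mono
        nhdsWithin_le_nhds)).exists
  obtain ⟨hg, hgs, hgm⟩ := isStrategy_balancedStep hε hεa.le ha.2
  refine ⟨_, hg, hgs, hgm, ?_⟩
  have hpq : (1 - 2 * a)⁺ + (1 - 2 * a)⁻ ≤ 1 := by
    rw [posPart_add_negPart, abs_le]
    constructor <;> linarith [ha.2]
  calc wp f (balancedStep a ε)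
      ≤ ε * (pointPayoff f a + η) + (1 - 2 * a)⁺ * (ε * (pointPayoff f 1 + η))
        + (1 - 2 * a)⁻ * (ε * (pointPayoff f 0 + η)) := by
        rw [wp_balancedStep hf hεa.le ha.2]
        gcongr
        · simpa using hφa (a - ε) a le_rfl (by linarith) (by linarith)
        · simpa using hφ1 (1 - ε) 1 le_rfl (by linarith) (by linarith)
        · simpa using hφ0 0 ε (by linarith) hε.le (by linarith)
    _ = ε * ((1 + (1 - 2 * a)⁺ + (1 - 2 * a)⁻) * η - 4 * η) := by
        rw [pointPayoff_zero, pointPayoff_one hs]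
        linear_combination 4 * ε * hη_def - ε * I * posPart_sub_negPart (1 - 2 * a)
    _ < 0 := mul_neg_of_pos_of_neg hε
        (by nlinarith [mul_le_mul_of_nonneg_right hpq hη.le])

end Construction

theorem stmt10 (f : ℝ → ℝ) (hf : IsStrategy f)
    (hsupp : Function.support f ⊆ Icc (0:ℝ) 1) (hmca : mca f ≤ 1/2)
    (hnc : ¬ ∃ c : ℝ, ∀ᵐ x ∂(volume.restrict (Icc (0:ℝ) 1)), f x = c) :
    ∃ g : ℝ → ℝ, IsStrategy g ∧ Function.support g ⊆ Icc (0:ℝ) 1 ∧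
      mca g ≤ 1/2 ∧ wp f g < 0 := by
  have hfi := hf.integrable_s10
  obtain ⟨a, ha, hlt⟩ :=
    exists_mul_lt_primitive hfi hsupp ((mca_le_iff hf.integral_pos_s10).1 hmca) hnc
  exact exists_isStrategy_wp_neg hfi hsupp ha hlt
end
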